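/- For every κ > 1, every b ∈ (0,1), and every integer n ≥ 0 with S_n(b) > 0, the following hold: λ_n^+(b) ≠ nκ/(n+1), λ_n^−(b) ≠ nκ/(n+1), λ_n^+(b) ≠ κb²/2 + (nκ+1)/(2(n+1)), and λ_n^−(b) ≠ κb²/2 + (nκ+1)/(2(n+1)). -/
import Mathlib


open Set

noncomputable section

/-- `S_n(b) = (κb²/2 − (nκ−1)/(2(n+1)))² − κ b^{2n+2}/(n+1)²`. -/
def Sn (κ : ℝ) (n : ℕ) (b : ℝ) : ℝ :=
  (κ * b ^ 2 / 2 - ((n : ℝ) * κ - 1) / (2 * ((n : ℝ) + 1))) ^ 2 -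
    κ * b ^ (2 * n + 2) / ((n : ℝ) + 1) ^ 2

/-- `λ_n^+(b) = κb²/2 + (nκ+1)/(2(n+1)) + √(S_n(b))`. -/
def lamP (κ : ℝ) (n : ℕ) (b : ℝ) : ℝ :=
  κ * b ^ 2 / 2 + ((n : ℝ) * κ + 1) / (2 * ((n : ℝ) + 1)) + Real.sqrt (Sn κ n b)

/-- `λ_n^−(b) = κb²/2 + (nκ+1)/(2(n+1)) − √(S_n(b))`. -/
def lamM (κ : ℝ) (n : ℕ) (b : ℝ) : ℝ :=
  κ * b ^ 2 / 2 + ((n : ℝ) * κ + 1) / (2 * ((n : ℝ) + 1)) - Real.sqrt (Sn κ n b)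

/-- The transversality condition: for `κ > 1`, `b ∈ (0,1)` and `n ≥ 0` with `S_n(b) > 0`,
the eigenvalues `λ_n^±(b)` avoid the two exceptional values `nκ/(n+1)` and
`κb²/2 + (nκ+1)/(2(n+1))`. -/
theorem transversality_condition
    (κ b : ℝ) (hκ : 1 < κ) (hb : b ∈ Ioo (0 : ℝ) 1)
    (n : ℕ) (hS : 0 < Sn κ n b) :
    lamP κ n b ≠ (n : ℝ) * κ / ((n : ℝ) + 1) ∧
    lamM κ n b ≠ (n : ℝ) * κ / ((n : ℝ) + 1) ∧
    lamP κ n b ≠ κ * b ^ 2 / 2 + ((n : ℝ) * κ + 1) / (2 * ((n : ℝ) + 1)) ∧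
    lamM κ n b ≠ κ * b ^ 2 / 2 + ((n : ℝ) * κ + 1) / (2 * ((n : ℝ) + 1)) := by
  obtain ⟨hb0, hb1⟩ := hb
  have hκ0 : (0:ℝ) < κ := by linarith
  have hn : (0:ℝ) < (n:ℝ) + 1 := by positivity
  have hc : 0 < κ * b ^ (2 * n + 2) / ((n : ℝ) + 1) ^ 2 := by positivity
  have hsqpos : 0 < Real.sqrt (Sn κ n b) := Real.sqrt_pos.mpr hS
  have hs2 : (Real.sqrt (Sn κ n b)) ^ 2 = Sn κ n b := Real.sq_sqrt hS.le
  have key : ∀ t : ℝ, t ^ 2 = Sn κ n b →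
      κ * b ^ 2 / 2 + ((n : ℝ) * κ + 1) / (2 * ((n : ℝ) + 1)) + t ≠ (n : ℝ) * κ / ((n : ℝ) + 1) := by
    intro t ht heq
    have hA : t = -(κ * b ^ 2 / 2 - ((n : ℝ) * κ - 1) / (2 * ((n : ℝ) + 1))) := by
      have h1 : t = (n : ℝ) * κ / ((n : ℝ) + 1) - κ * b ^ 2 / 2
          - ((n : ℝ) * κ + 1) / (2 * ((n : ℝ) + 1)) := by linarith
      rw [h1]; field_simp; ring
    rw [hA] at ht
    unfold Sn at ht
    nlinarith [hc]
  refine ⟨key _ hs2, ?_, ?_, ?_⟩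
  · have := key (-(Real.sqrt (Sn κ n b))) (by rw [neg_pow]; simpa using hs2)
    simpa [lamM, sub_eq_add_neg] using this
  · unfold lamP; intro h; nlinarith
  · unfold lamM; intro h; nlinarith
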